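/- arXiv:2107.06404 — 2 statements merged into one kernel-verified Lean document; each statement's English description precedes it below -/
import Mathlib

section
/- (Discrete Riemann–Lebesgue lemma, first order) Let λ : [0,1] → ℝ be positive, f : [0,1] → ℂ continuously differentiable, L ≥ 1, T > 0, δt := T/L, and suppose δt·λ(s) < 3.78 for all s. Write f_k = f(s_k), g_k = (1/L)∑_{j<k} λ(s_j), ω(s) = (e^{-i δt λ(s)} - 1)/(i δt). Then |(1/L) ∑_{k=1}^{L} f_k e^{-iT g_k}| ≤ (1/T)( |f(s_L)/ω(s_L)| + |f(s_0)/ω(s_0)| + ∑_{k=1}^L |f(s_k)/ω(s_k) - f(s_{k-1})/ω(s_{k-1})| ). -/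
/-!
With `E k = exp (-i T g_k)` and `c = i δt`, the definition of `g` gives
`E (k+1) - E k = ω(s_k) c E k`, so `f_k E k c = (f_k / ω(s_k)) (E (k+1) - E k)`.
Summation by parts against the unimodular `E` bounds the sum by the endpoint terms and the total
variation of `f / ω`. The division is legitimate because `0 < δt λ < 3.78 < 2π`, so
`exp (-i δt λ) ≠ 1`.
-/

open Complex

theorem sum_Icc_mul_sub_by_parts {R : Type*} [Ring R] (a b : ℕ → R) (n : ℕ) :
    ∑ k ∈ Finset.Icc 1 n, a k * (b (k + 1) - b k) =
      a n * b (n + 1) - a 0 * b 1 - ∑ k ∈ Finset.Icc 1 n, (a k - a (k - 1)) * b k := by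
  induction n with
  | zero => simp
  | succ n ih =>
    rw [Finset.sum_Icc_succ_top (by omega), Finset.sum_Icc_succ_top (by omega), ih,
      Nat.add_sub_cancel]
    noncomm_ring

theorem norm_sum_Icc_mul_sub_le {R : Type*} [SeminormedRing R] {a b : ℕ → R}
    (hb : ∀ k, ‖b k‖ ≤ 1) (n : ℕ) :
    ‖∑ k ∈ Finset.Icc 1 n, a k * (b (k + 1) - b k)‖ ≤
      ‖a n‖ + ‖a 0‖ + ∑ k ∈ Finset.Icc 1 n, ‖a k - a (k - 1)‖ := by
  have hmul : ∀ x k, ‖x * b k‖ ≤ ‖x‖ := fun x k =>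
    (norm_mul_le _ _).trans (mul_le_of_le_one_right (norm_nonneg _) (hb k))
  rw [sum_Icc_mul_sub_by_parts]
  refine (norm_sub_le _ _).trans (add_le_add ((norm_sub_le _ _).trans
    (add_le_add (hmul _ _) (hmul _ _))) ((norm_sum_le _ _).trans ?_))
  exact Finset.sum_le_sum fun k _ => hmul _ _

theorem exp_neg_I_mul_ne_one {θ : ℝ} (h0 : 0 < θ) (h2π : θ < 2 * Real.pi) :
    exp (-(I * θ)) ≠ 1 := by
  intro h
  obtain ⟨n, hn⟩ := exp_eq_one_iff.mp h
  have him : -θ = n * (2 * Real.pi) := by simpa using congrArg im hn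
  have hneg : n < 0 := by
    have : (n : ℝ) < 0 := by nlinarith [Real.pi_pos]
    exact_mod_cast this
  have hgt : -1 < n := by
    have : (-1 : ℝ) < n := by nlinarith [Real.pi_pos]
    exact_mod_cast this
  omega

theorem norm_sum_Icc_mul_mul_le_of_sub_eq {𝕜 : Type*} [NormedField 𝕜] {z E ω : ℕ → 𝕜}
    {c : 𝕜} {n : ℕ} (hE : ∀ k, ‖E k‖ ≤ 1)
    (hstep : ∀ k ∈ Finset.Icc 1 n, E (k + 1) - E k = ω k * c * E k)
    (hω : ∀ k ∈ Finset.Icc 1 n, ω k ≠ 0) :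
    ‖(∑ k ∈ Finset.Icc 1 n, z k * E k) * c‖ ≤
      ‖z n / ω n‖ + ‖z 0 / ω 0‖ + ∑ k ∈ Finset.Icc 1 n, ‖z k / ω k - z (k - 1) / ω (k - 1)‖ := by
  have hsum : (∑ k ∈ Finset.Icc 1 n, z k * E k) * c =
      ∑ k ∈ Finset.Icc 1 n, z k / ω k * (E (k + 1) - E k) := by
    rw [Finset.sum_mul]
    refine Finset.sum_congr rfl fun k hk => ?_
    rw [hstep k hk]
    field_simp [hω k hk]
  rw [hsum]
  exact norm_sum_Icc_mul_sub_le hE n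

theorem stmt8_general (L : ℕ) (hL : 1 ≤ L) (T : ℝ) (hT : 0 < T) (f : ℝ → ℂ) (lam : ℝ → ℝ)
    (hlam : ∀ s ∈ Set.Icc (0:ℝ) 1, 0 < lam s ∧ (T / L) * lam s < 3.78)
    (s : ℕ → ℝ) (hs : ∀ k, s k = (k : ℝ) / L)
    (g : ℕ → ℝ) (hg : ∀ k, g k = (1 / (L : ℝ)) * ∑ j ∈ Finset.range k, lam (s j))
    (ω : ℝ → ℂ)
    (hω : ∀ x, ω x = (Complex.exp (-(Complex.I * (T / L) * lam x)) - 1) /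
      (Complex.I * (T / L))) :
    ‖(1 / (L : ℂ)) * ∑ k ∈ Finset.Icc 1 L,
        f (s k) * Complex.exp (-(Complex.I * T * g k))‖ ≤
      (1 / T) * (‖f (s L) / ω (s L)‖ + ‖f (s 0) / ω (s 0)‖ +
        ∑ k ∈ Finset.Icc 1 L,
          ‖f (s k) / ω (s k) - f (s (k - 1)) / ω (s (k - 1))‖) := by
  have hLpos : (0 : ℝ) < L := by exact_mod_cast hL
  set c : ℂ := I * (T / L) with hc
  have hc_norm : ‖c‖ = T / L := by simp [hc, abs_of_pos hT]
  have hc0 : c ≠ 0 := norm_ne_zero_iff.mp (by rw [hc_norm]; positivity)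
  set E : ℕ → ℂ := fun k => exp (-(I * T * g k)) with hE
  have hstep : ∀ k, E (k + 1) - E k = ω (s k) * c * E k := by
    intro k
    rw [hω, div_mul_cancel₀ _ hc0, sub_one_mul, sub_left_inj]
    simp only [hE, hc, ← exp_add, hg, Finset.sum_range_succ]
    push_cast
    ring_nf
  have hω0 : ∀ k ∈ Finset.Icc 1 L, ω (s k) ≠ 0 := by
    intro k hk
    have hsk : s k ∈ Set.Icc (0 : ℝ) 1 := by
      rw [hs, Set.mem_Icc, div_le_one hLpos]
      exact ⟨by positivity, by exact_mod_cast (Finset.mem_Icc.mp hk).2⟩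
    obtain ⟨hlam0, hlam1⟩ := hlam (s k) hsk
    have hexp := exp_neg_I_mul_ne_one (θ := T / L * lam (s k)) (by positivity)
      (by linarith [Real.pi_gt_three])
    push_cast at hexp
    rw [hω]
    refine div_ne_zero (sub_ne_zero.mpr ?_) hc0
    rwa [hc, mul_assoc]
  calc ‖(1 / (L : ℂ)) * ∑ k ∈ Finset.Icc 1 L, f (s k) * E k‖
      = (1 / T) * ‖(∑ k ∈ Finset.Icc 1 L, f (s k) * E k) * c‖ := by
        rw [norm_mul, norm_mul, hc_norm, norm_div, norm_one, Complex.norm_natCast]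
        field_simp
    _ ≤ _ := by
        gcongr
        exact norm_sum_Icc_mul_mul_le_of_sub_eq (z := fun k => f (s k)) (ω := fun k => ω (s k))
          (fun k => by simp [hE, norm_exp]) (fun k _ => hstep k) hω0

/-- (Discrete Riemann–Lebesgue lemma, first order) Let `lam : [0,1] → ℝ` be positive,
`f : [0,1] → ℂ` continuously differentiable, `L ≥ 1`, `T > 0`, `δt := T/L`, and suppose
`δt·lam(s) < 3.78` on `[0,1]`. With sample points `s_k = k/L`, `f_k = f(s_k)`,
`g_k = (1/L)∑_{j<k} lam(s_j)` and `ω(s) = (e^{-i δt lam(s)} - 1)/(i δt)`, we have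
`|(1/L) ∑_{k=1}^{L} f_k e^{-iT g_k}|
  ≤ (1/T)(|f(s_L)/ω(s_L)| + |f(s_0)/ω(s_0)|
      + ∑_{k=1}^L |f(s_k)/ω(s_k) - f(s_{k-1})/ω(s_{k-1})|)`. -/
theorem stmt8 (L : ℕ) (hL : 1 ≤ L) (T : ℝ) (hT : 0 < T) (f : ℝ → ℂ) (lam : ℝ → ℝ)
    (hf : ContDiffOn ℝ 1 f (Set.Icc (0:ℝ) 1))
    (hlam : ∀ s ∈ Set.Icc (0:ℝ) 1, 0 < lam s ∧ (T / L) * lam s < 3.78)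
    (s : ℕ → ℝ) (hs : ∀ k, s k = (k : ℝ) / L)
    (g : ℕ → ℝ) (hg : ∀ k, g k = (1 / (L : ℝ)) * ∑ j ∈ Finset.range k, lam (s j))
    (ω : ℝ → ℂ)
    (hω : ∀ x, ω x = (Complex.exp (-(Complex.I * (T / L) * lam x)) - 1) /
      (Complex.I * (T / L))) :
    ‖(1 / (L : ℂ)) * ∑ k ∈ Finset.Icc 1 L,
        f (s k) * Complex.exp (-(Complex.I * T * g k))‖ ≤
      (1 / T) * (‖f (s L) / ω (s L)‖ + ‖f (s 0) / ω (s 0)‖ +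
        ∑ k ∈ Finset.Icc 1 L,
          ‖f (s k) / ω (s k) - f (s (k - 1)) / ω (s (k - 1))‖) :=
  stmt8_general L hL T hT f lam hlam s hs g hg ω hω
end

section
/- With notation as above (shifted Hamiltonian H with HP = 0, G its pseudo-inverse with GH = HG = I - P, GP = PG = 0), the derivative of G satisfies G' = P H' G² - G H' G + G² H' P. -/
open Matrix

/-! The identity `G' = G' (H G + P)` splits `G'` into `G' H G` and `G' P`; differentiating
`G H = 1 - P` and `G P = 0` expresses these through `P'` and `H'`, and the formula for `P'`
together with `P G = G P = 0` collapses the result. -/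

section EntrywiseDeriv

variable {𝕜 𝔸 : Type*} [NontriviallyNormedField 𝕜] [NormedRing 𝔸] [NormedAlgebra 𝕜 𝔸]
  {l m n : Type*}

def HasEntrywiseDerivAt (A : 𝕜 → Matrix m n 𝔸) (A' : Matrix m n 𝔸) (x : 𝕜) : Prop :=
  ∀ i j, HasDerivAt (fun t => A t i j) (A' i j) x

theorem HasEntrywiseDerivAt.unique {A : 𝕜 → Matrix m n 𝔸} {A₀' A₁' : Matrix m n 𝔸} {x : 𝕜}
    (h₀ : HasEntrywiseDerivAt A A₀' x) (h₁ : HasEntrywiseDerivAt A A₁' x) : A₀' = A₁' :=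
  Matrix.ext fun i j => (h₀ i j).unique (h₁ i j)

theorem HasEntrywiseDerivAt.const_sub {A : 𝕜 → Matrix m n 𝔸} {A' : Matrix m n 𝔸} {x : 𝕜}
    (C : Matrix m n 𝔸) (h : HasEntrywiseDerivAt A A' x) :
    HasEntrywiseDerivAt (fun t => C - A t) (-A') x :=
  fun i j => (h i j).const_sub (C i j)

theorem hasEntrywiseDerivAt_const (C : Matrix m n 𝔸) (x : 𝕜) :
    HasEntrywiseDerivAt (fun _ => C) 0 x :=
  fun i j => hasDerivAt_const x (C i j)

theorem HasEntrywiseDerivAt.mul [Fintype m] {A : 𝕜 → Matrix l m 𝔸} {B : 𝕜 → Matrix m n 𝔸}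
    {A' : Matrix l m 𝔸} {B' : Matrix m n 𝔸} {x : 𝕜}
    (hA : HasEntrywiseDerivAt A A' x) (hB : HasEntrywiseDerivAt B B' x) :
    HasEntrywiseDerivAt (fun t => A t * B t) (A' * B x + A x * B') x := by
  intro i j
  simp only [Matrix.add_apply, mul_apply, ← Finset.sum_add_distrib]
  exact HasDerivAt.fun_sum fun k _ => (hA i k).mul (hB k j)

end EntrywiseDeriv

section PseudoInverse

variable {R : Type*} [Ring R] {H P G H' P' G' : R}

theorem pseudoInverse_deriv_eq_neg_projector_deriv (hHG : H * G = 1 - P)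
    (hGH_deriv : G' * H + G * H' = -P') (hGP_deriv : G' * P + G * P' = 0) :
    G' = -(P' * G) - G * H' * G - G * P' := by
  have hsplit : G' = G' * H * G + G' * P := by
    rw [mul_assoc, hHG, mul_sub, mul_one, sub_add_cancel]
  rw [hsplit, eq_neg_add_of_add_eq hGH_deriv, eq_neg_of_add_eq_zero_left hGP_deriv]
  noncomm_ring

theorem pseudoInverse_deriv_eq (hHG : H * G = 1 - P) (hGP : G * P = 0)
    (hPG : P * G = 0) (hGH_deriv : G' * H + G * H' = -P') (hGP_deriv : G' * P + G * P' = 0)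
    (hP' : P' = -(G * H' * P) - P * H' * G) :
    G' = P * H' * (G * G) - G * H' * G + (G * G) * H' * P := by
  have hP'G : P' * G = -(P * H' * (G * G)) := by
    rw [hP', sub_mul, neg_mul, mul_assoc (G * H'), hPG]
    noncomm_ring
  have hGP' : G * P' = -(G * G * H' * P) := by
    rw [hP', mul_sub, mul_neg, show G * (P * H' * G) = G * P * (H' * G) by noncomm_ring, hGP]
    noncomm_ring
  rw [pseudoInverse_deriv_eq_neg_projector_deriv hHG hGH_deriv hGP_deriv, hP'G, hGP']
  noncomm_ring

end PseudoInverse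

theorem stmt12_general (n : ℕ) (H P G : ℝ → Matrix (Fin n) (Fin n) ℂ)
    (H' P' G' : Matrix (Fin n) (Fin n) ℂ) (s₀ : ℝ)
    (hGH : ∀ s, G s * H s = 1 - P s) (hHG : ∀ s, H s * G s = 1 - P s)
    (hGP : ∀ s, G s * P s = 0) (hPG : ∀ s, P s * G s = 0)
    (hHd : ∀ i j, HasDerivAt (fun s => H s i j) (H' i j) s₀)
    (hPd : ∀ i j, HasDerivAt (fun s => P s i j) (P' i j) s₀)
    (hGd : ∀ i j, HasDerivAt (fun s => G s i j) (G' i j) s₀)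
    (hP' : P' = -(G s₀ * H' * P s₀) - P s₀ * H' * G s₀) :
    G' = P s₀ * H' * (G s₀ * G s₀) - G s₀ * H' * G s₀ + (G s₀ * G s₀) * H' * P s₀ := by
  have hH : HasEntrywiseDerivAt H H' s₀ := hHd
  have hP : HasEntrywiseDerivAt P P' s₀ := hPd
  have hG : HasEntrywiseDerivAt G G' s₀ := hGd
  have hGH' : G' * H s₀ + G s₀ * H' = -P' := by
    refine (hG.mul hH).unique ?_
    simpa only [hGH] using hP.const_sub 1
  have hGP' : G' * P s₀ + G s₀ * P' = 0 := by
    refine (hG.mul hP).unique ?_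
    simpa only [hGP] using hasEntrywiseDerivAt_const (0 : Matrix (Fin n) (Fin n) ℂ) s₀
  exact pseudoInverse_deriv_eq (hHG s₀) (hGP s₀) (hPG s₀) hGH' hGP' hP'

/-- With the shifted Hamiltonian `H` (`HP = 0`), spectral projector `P` and pseudo-inverse
`G` (`GH = HG = I - P`, `GP = PG = 0`, `P' = -G H' P - P H' G`), the derivative of `G`
satisfies `G' = P H' G² - G H' G + G² H' P`. -/
theorem stmt12 (n : ℕ) (H P G : ℝ → Matrix (Fin n) (Fin n) ℂ)
    (H' P' G' : Matrix (Fin n) (Fin n) ℂ) (s₀ : ℝ)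
    (hHerm : ∀ s, (H s).IsHermitian) (hPHerm : ∀ s, (P s).IsHermitian)
    (hGHerm : ∀ s, (G s).IsHermitian)
    (hProj : ∀ s, P s * P s = P s)
    (hHP : ∀ s, H s * P s = 0)
    (hGH : ∀ s, G s * H s = 1 - P s) (hHG : ∀ s, H s * G s = 1 - P s)
    (hGP : ∀ s, G s * P s = 0) (hPG : ∀ s, P s * G s = 0)
    (hHd : ∀ i j, HasDerivAt (fun s => H s i j) (H' i j) s₀)
    (hPd : ∀ i j, HasDerivAt (fun s => P s i j) (P' i j) s₀)
    (hGd : ∀ i j, HasDerivAt (fun s => G s i j) (G' i j) s₀)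
    (hP' : P' = -(G s₀ * H' * P s₀) - P s₀ * H' * G s₀) :
    G' = P s₀ * H' * (G s₀ * G s₀) - G s₀ * H' * G s₀ + (G s₀ * G s₀) * H' * P s₀ :=
  stmt12_general n H P G H' P' G' s₀ hGH hHG hGP hPG hHd hPd hGd hP'
end
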